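/- arXiv:nlin/0205019 — 7 statements merged into one kernel-verified Lean document; each statement's English description precedes it below -/
import Mathlib

section
/- For each i ∈ {0,1,2}, the birational transformation s_i is an involution: if (a_0,a_1,a_2,f_0,f_1,f_2) is a tuple of nonzero complex numbers with 1 + a_i f_i ≠ 0 and a_i + f_i ≠ 0, and the same two quantities computed from the image tuple are also nonzero, then applying s_i twice returns the original tuple (a_0,a_1,a_2,f_0,f_1,f_2). -/
/-!
`sᵢ` sends `aᵢ` to `aᵢ⁻¹` and fixes `fᵢ`, hence inverts the ratio `(aᵢ + fᵢ) / (1 + aᵢ fᵢ)`.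
Every coordinate is multiplied by `c ^ n` under the first application and by `(c⁻¹) ^ n` under
the second, with `c = aᵢ` for the `a`-coordinates and `c` the ratio for the `f`-coordinates.
-/

/-- Generalized Cartan matrix of type `A₂⁽¹⁾`. -/
def cartanA2 : Fin 3 → Fin 3 → ℤ := ![![2, -1, -1], ![-1, 2, -1], ![-1, -1, 2]]

/-- Orientation matrix of the `A₂⁽¹⁾` Dynkin diagram. -/
def orientA2 : Fin 3 → Fin 3 → ℤ := ![![0, 1, -1], ![-1, 0, 1], ![1, -1, 0]]

/-- The birational transformation `sᵢ` on tuples `(a₀,a₁,a₂,f₀,f₁,f₂)`: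
`sᵢ(aⱼ) = aⱼ aᵢ^(-Aᵢⱼ)`, `sᵢ(fⱼ) = fⱼ ((aᵢ+fᵢ)/(1+aᵢfᵢ))^(uᵢⱼ)`. -/
noncomputable def weylS (i : Fin 3) (x : (Fin 3 → ℂ) × (Fin 3 → ℂ)) :
    (Fin 3 → ℂ) × (Fin 3 → ℂ) :=
  ⟨fun j => x.1 j * x.1 i ^ (-(cartanA2 i j)),
   fun j => x.2 j * ((x.1 i + x.2 i) / (1 + x.1 i * x.2 i)) ^ (orientA2 i j)⟩

theorem inv_add_div_one_add_inv_mul {K : Type*} [Field K] {a : K} (ha : a ≠ 0) (b : K) :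
    (a⁻¹ + b) / (1 + a⁻¹ * b) = ((a + b) / (1 + a * b))⁻¹ := by
  rw [inv_div, ← mul_div_mul_left _ _ ha, mul_add, mul_add, mul_inv_cancel_left₀ ha,
    mul_inv_cancel₀ ha, mul_one]

section weylS

variable (i : Fin 3) (x : (Fin 3 → ℂ) × (Fin 3 → ℂ))

theorem weylS_fst (j : Fin 3) : (weylS i x).1 j = x.1 j * x.1 i ^ (-(cartanA2 i j)) := rfl

theorem weylS_snd (j : Fin 3) :
    (weylS i x).2 j = x.2 j * ((x.1 i + x.2 i) / (1 + x.1 i * x.2 i)) ^ (orientA2 i j) := rfl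

theorem weylS_fst_self : (weylS i x).1 i = (x.1 i)⁻¹ := by
  have hA : cartanA2 i i = 2 := by fin_cases i <;> rfl
  rw [weylS_fst, hA, zpow_neg, zpow_two, ← div_eq_mul_inv, div_self_mul_self']

theorem weylS_snd_self : (weylS i x).2 i = x.2 i := by
  have hU : orientA2 i i = 0 := by fin_cases i <;> rfl
  rw [weylS_snd, hU, zpow_zero, mul_one]

end weylS

theorem weylS_involutive_general (i : Fin 3) (x : (Fin 3 → ℂ) × (Fin 3 → ℂ))
    (ha : ∀ j, x.1 j ≠ 0)
    (h1 : 1 + x.1 i * x.2 i ≠ 0) (h2 : x.1 i + x.2 i ≠ 0) :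
    weylS i (weylS i x) = x := by
  have hratio : ((weylS i x).1 i + (weylS i x).2 i) / (1 + (weylS i x).1 i * (weylS i x).2 i) =
      ((x.1 i + x.2 i) / (1 + x.1 i * x.2 i))⁻¹ := by
    rw [weylS_fst_self, weylS_snd_self, inv_add_div_one_add_inv_mul (ha i)]
  ext j
  · rw [weylS_fst, weylS_fst_self, weylS_fst, inv_zpow,
      mul_inv_cancel_right₀ (zpow_ne_zero _ (ha i))]
  · rw [weylS_snd, hratio, weylS_snd, inv_zpow,
      mul_inv_cancel_right₀ (zpow_ne_zero _ (div_ne_zero h2 h1))]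

/-- each `sᵢ` is an involution on tuples of nonzero complex numbers
where the relevant quantities (for the tuple and its image) are nonzero. -/
theorem weylS_involutive (i : Fin 3) (x : (Fin 3 → ℂ) × (Fin 3 → ℂ))
    (ha : ∀ j, x.1 j ≠ 0) (hf : ∀ j, x.2 j ≠ 0)
    (h1 : 1 + x.1 i * x.2 i ≠ 0) (h2 : x.1 i + x.2 i ≠ 0)
    (h1' : 1 + (weylS i x).1 i * (weylS i x).2 i ≠ 0)
    (h2' : (weylS i x).1 i + (weylS i x).2 i ≠ 0) :
    weylS i (weylS i x) = x :=
  weylS_involutive_general i x ha h1 h2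
end

section
/- The transformation w_0 is an involution: if (a_0,a_1,a_2,f_0,f_1,f_2) is a tuple of nonzero complex numbers such that all denominators occurring in w_0 and in w_0 applied to the image are nonzero, then applying w_0 twice returns the original tuple. -/
/-!
With `sᵢ = aᵢ a_{i+1} + aᵢ f_{i+1} + fᵢ f_{i+1}` (`weylForm`) we have
`w₀(fᵢ) = aᵢ a_{i+1} s_{i-1} / (f_{i-1} sᵢ)`. The polynomial identity
`fᵢ f_{i-1} s_{i+1} + a_{i-1} f_{i-1} sᵢ + a_{i+1} a_{i-1} s_{i-1} = s_{i+1} s_{i-1}`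
shows that the forms `s'ᵢ` of the image satisfy `fᵢ s'ᵢ = w₀(fᵢ) sᵢ`. Substituting this
twisting relation into the formula for `w₀(w₀(fᵢ))`, every factor cancels and `fᵢ` comes back.
-/

/-- The point transformation `w₀`: `w₀(aᵢ) = aᵢ` and
`w₀(fᵢ) = aᵢ a_{i+1} (a_{i-1} aᵢ + a_{i-1} fᵢ + f_{i-1} fᵢ) /
          ( f_{i-1} (aᵢ a_{i+1} + aᵢ f_{i+1} + fᵢ f_{i+1}) )`,
with indices in `ℤ/3ℤ` (so `i - 1 = i + 2` in `Fin 3`). -/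
noncomputable def weylW0 (x : (Fin 3 → ℂ) × (Fin 3 → ℂ)) :
    (Fin 3 → ℂ) × (Fin 3 → ℂ) :=
  ⟨x.1,
   fun i => x.1 i * x.1 (i + 1) *
      (x.1 (i + 2) * x.1 i + x.1 (i + 2) * x.2 i + x.2 (i + 2) * x.2 i) /
      (x.2 (i + 2) * (x.1 i * x.1 (i + 1) + x.1 i * x.2 (i + 1) + x.2 i * x.2 (i + 1)))⟩

theorem fin_three_add_one_add_one (i : Fin 3) : i + 1 + 1 = i + 2 := by revert i; decide

theorem fin_three_add_one_add_two (i : Fin 3) : i + 1 + 2 = i := by revert i; decide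

theorem fin_three_add_two_add_one (i : Fin 3) : i + 2 + 1 = i := by revert i; decide

section WeylForm

variable {R : Type*} [CommRing R]

def weylForm (x : (Fin 3 → R) × (Fin 3 → R)) (i : Fin 3) : R :=
  x.1 i * x.1 (i + 1) + x.1 i * x.2 (i + 1) + x.2 i * x.2 (i + 1)

theorem weylForm_mul_weylForm (x : (Fin 3 → R) × (Fin 3 → R)) (i : Fin 3) :
    x.2 i * x.2 (i + 2) * weylForm x (i + 1) + x.1 (i + 2) * x.2 (i + 2) * weylForm x i +
        x.1 (i + 1) * x.1 (i + 2) * weylForm x (i + 2) =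
      weylForm x (i + 1) * weylForm x (i + 2) := by
  simp only [weylForm, fin_three_add_one_add_one, fin_three_add_two_add_one]
  ring

end WeylForm

theorem weylW0_fst (x : (Fin 3 → ℂ) × (Fin 3 → ℂ)) : (weylW0 x).1 = x.1 := rfl

theorem weylW0_snd (x : (Fin 3 → ℂ) × (Fin 3 → ℂ)) (i : Fin 3) :
    (weylW0 x).2 i =
      x.1 i * x.1 (i + 1) * weylForm x (i + 2) / (x.2 (i + 2) * weylForm x i) := by
  simp only [weylW0, weylForm, fin_three_add_two_add_one]

theorem weylForm_weylW0 (x : (Fin 3 → ℂ) × (Fin 3 → ℂ)) (hf : ∀ j, x.2 j ≠ 0)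
    (hs : ∀ j, weylForm x j ≠ 0) (i : Fin 3) :
    x.2 i * weylForm (weylW0 x) i = (weylW0 x).2 i * weylForm x i := by
  have key := weylForm_mul_weylForm x i
  have hf0 := hf i
  have hf2 := hf (i + 2)
  have hs0 := hs i
  have hs1 := hs (i + 1)
  rw [weylForm, weylW0_snd, weylW0_snd, fin_three_add_one_add_two, fin_three_add_one_add_one]
  simp only [weylW0]
  field_simp
  linear_combination x.1 i * x.1 (i + 1) * key

theorem weylW0_weylW0_snd (x : (Fin 3 → ℂ) × (Fin 3 → ℂ)) (hf : ∀ j, x.2 j ≠ 0)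
    (hs : ∀ j, weylForm x j ≠ 0) (i : Fin 3)
    (hden : (weylW0 x).2 (i + 2) * weylForm (weylW0 x) i ≠ 0) :
    (weylW0 (weylW0 x)).2 i = x.2 i := by
  have twist := weylForm_weylW0 x hf hs i
  have twist_prev := weylForm_weylW0 x hf hs (i + 2)
  have hg : (weylW0 x).2 i * (x.2 (i + 2) * weylForm x i) =
      x.1 i * x.1 (i + 1) * weylForm x (i + 2) :=
    (eq_div_iff (mul_ne_zero (hf _) (hs i))).mp (weylW0_snd x i)
  rw [weylW0_snd, weylW0_fst, div_eq_iff hden]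
  refine mul_left_cancel₀ (hf (i + 2)) ?_
  linear_combination x.1 i * x.1 (i + 1) * twist_prev -
    x.2 (i + 2) * (weylW0 x).2 (i + 2) * twist - (weylW0 x).2 (i + 2) * hg

theorem weylW0_involutive_general (x : (Fin 3 → ℂ) × (Fin 3 → ℂ))
    (hf : ∀ j, x.2 j ≠ 0)
    (hden : ∀ i, x.2 (i + 2) *
      (x.1 i * x.1 (i + 1) + x.1 i * x.2 (i + 1) + x.2 i * x.2 (i + 1)) ≠ 0)
    (hden' : ∀ i, (weylW0 x).2 (i + 2) *
      ((weylW0 x).1 i * (weylW0 x).1 (i + 1) + (weylW0 x).1 i * (weylW0 x).2 (i + 1) +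
        (weylW0 x).2 i * (weylW0 x).2 (i + 1)) ≠ 0) :
    weylW0 (weylW0 x) = x := by
  have hs : ∀ j, weylForm x j ≠ 0 := fun j => right_ne_zero_of_mul (hden j)
  exact Prod.ext (weylW0_fst _) (funext fun i => weylW0_weylW0_snd x hf hs i (hden' i))

/-- `w₀` is an involution on tuples of nonzero complex numbers such that
all denominators occurring in `w₀` and in `w₀` applied to the image are nonzero. -/
theorem weylW0_involutive (x : (Fin 3 → ℂ) × (Fin 3 → ℂ))
    (ha : ∀ j, x.1 j ≠ 0) (hf : ∀ j, x.2 j ≠ 0)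
    (hden : ∀ i, x.2 (i + 2) *
      (x.1 i * x.1 (i + 1) + x.1 i * x.2 (i + 1) + x.2 i * x.2 (i + 1)) ≠ 0)
    (hden' : ∀ i, (weylW0 x).2 (i + 2) *
      ((weylW0 x).1 i * (weylW0 x).1 (i + 1) + (weylW0 x).1 i * (weylW0 x).2 (i + 1) +
        (weylW0 x).2 i * (weylW0 x).2 (i + 1)) ≠ 0) :
    weylW0 (weylW0 x) = x :=
  weylW0_involutive_general x hf hden hden'
end

section
/- Let V_0, V_1, K_0, K_1 : ℝ → ℂ be differentiable functions with V_0 and V_1 nowhere vanishing, and let α_0, α_1, β_0 ∈ ℂ be constants with α_0 + α_1 = 1. Assume that for all t: V_0'(t) = V_0(t)·(K_1(t) + V_1(t) − K_0(t) − V_0(t) + α_0), V_1'(t) = V_1(t)·(K_0(t) + V_0(t) − K_1(t) − V_1(t) + α_1), K_0'(t) = K_0(t)V_0(t) − K_1(t)V_1(t), K_1'(t) = K_1(t)V_1(t) − K_0(t)V_0(t), together with the normalizations V_0(t)V_1(t) = e^t and K_0(t) + K_1(t) = β_0. Then V_0' is differentiable and V_0 satisfies the Painlevé III equation in the form V_0''(t)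 = (V_0'(t))²/V_0(t) + V_0(t)³ − (α_0 + β_0)·V_0(t)² + (β_0 − α_0 + 1)·e^t − e^{2t}/V_0(t) for all t. -/
/-!
Write `V₀' = V₀ g` with `g = K₁ + V₁ - K₀ - V₀ + α₀`. Then `V₀'' = V₀ g² + V₀ g' = V₀'² / V₀ + V₀ g'`,
and substituting the Toda equations into `g'`, all terms in `K₀, K₁` combine into `β₀ (eᵗ - V₀²)`
through `K₀ + K₁ = β₀`, while `V₁ = eᵗ / V₀` turns the remaining terms into the Painlevé III
right-hand side.
-/

open Complex

theorem hasDerivAt_deriv_of_deriv_eventuallyEq_mul {𝕜 𝔸 : Type*} [NontriviallyNormedField 𝕜]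
    [NormedRing 𝔸] [NormedAlgebra 𝕜 𝔸] {f g : 𝕜 → 𝔸} {g' : 𝔸} {t : 𝕜}
    (hf : DifferentiableAt 𝕜 f t) (hg : HasDerivAt g g' t) (h : deriv f =ᶠ[nhds t] f * g) :
    HasDerivAt (deriv f) (f t * g t * g t + f t * g') t := by
  have hfg : HasDerivAt (f * g) (deriv f t * g t + f t * g') t := hf.hasDerivAt.mul hg
  rw [h.eq_of_nhds] at hfg
  exact hfg.congr_of_eventuallyEq h

/-- The bracket is `g'` with `V₁', K₀', K₁', V₀'` replaced by the right-hand sides of the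
Toda equations. -/
theorem relToda_painleve_polynomial_identity {R : Type*} [CommRing R]
    {v0 v1 k0 k1 α0 α1 β0 E : R} (hE : v0 * v1 = E) (hβ : k0 + k1 = β0) :
    v0 * ((k1 * v1 - k0 * v0) + v1 * (k0 + v0 - k1 - v1 + α1) - (k0 * v0 - k1 * v1)
        - v0 * (k1 + v1 - k0 - v0 + α0)) =
      v0 ^ 3 - (α0 + β0) * v0 ^ 2 + (β0 + α1) * E - E * v1 := by
  linear_combination (k0 + k1 - v1 + α1) * hE + (E - v0 ^ 2) * hβ

theorem painleveIII_from_relativistic_Toda_general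
    (V0 V1 K0 K1 : ℝ → ℂ) (α0 α1 β0 : ℂ)
    (hV0d : Differentiable ℝ V0) (hV1d : Differentiable ℝ V1)
    (hK0d : Differentiable ℝ K0) (hK1d : Differentiable ℝ K1)
    (hV0 : ∀ t, V0 t ≠ 0)
    (hα : α0 + α1 = 1)
    (e1 : ∀ t, deriv V0 t = V0 t * (K1 t + V1 t - K0 t - V0 t + α0))
    (e2 : ∀ t, deriv V1 t = V1 t * (K0 t + V0 t - K1 t - V1 t + α1))
    (e3 : ∀ t, deriv K0 t = K0 t * V0 t - K1 t * V1 t)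
    (e4 : ∀ t, deriv K1 t = K1 t * V1 t - K0 t * V0 t)
    (n1 : ∀ t : ℝ, V0 t * V1 t = Complex.exp t)
    (n2 : ∀ t, K0 t + K1 t = β0) :
    Differentiable ℝ (deriv V0) ∧
    ∀ t : ℝ, deriv (deriv V0) t =
      (deriv V0 t) ^ 2 / V0 t + (V0 t) ^ 3 - (α0 + β0) * (V0 t) ^ 2 +
        (β0 - α0 + 1) * Complex.exp t - Complex.exp (2 * t) / V0 t := by
  have hg (t : ℝ) : HasDerivAt (fun s => K1 s + V1 s - K0 s - V0 s + α0)
      (deriv K1 t + deriv V1 t - deriv K0 t - deriv V0 t) t :=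
    ((((hK1d t).hasDerivAt.add (hV1d t).hasDerivAt).sub (hK0d t).hasDerivAt).sub
      (hV0d t).hasDerivAt).add_const α0
  have hV0'' (t : ℝ) :=
    hasDerivAt_deriv_of_deriv_eventuallyEq_mul (hV0d t) (hg t) (.of_forall e1)
  refine ⟨fun t => (hV0'' t).differentiableAt, fun t => ?_⟩
  have hg' := relToda_painleve_polynomial_identity (α0 := α0) (α1 := α1) (n1 t) (n2 t)
  rw [(hV0'' t).deriv, e1, e2, e3, e4, hg', two_mul, Complex.exp_add]
  field_simp [hV0 t]
  linear_combination (V0 t * exp t) * hα - exp t * n1 t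

/-- derivation of Painlevé III from the two-periodic relativistic
Toda lattice with additional constants `α₀, α₁` and normalizations
`α₀ + α₁ = 1`, `V₀V₁ = eᵗ`, `K₀ + K₁ = β₀`. -/
theorem painleveIII_from_relativistic_Toda
    (V0 V1 K0 K1 : ℝ → ℂ) (α0 α1 β0 : ℂ)
    (hV0d : Differentiable ℝ V0) (hV1d : Differentiable ℝ V1)
    (hK0d : Differentiable ℝ K0) (hK1d : Differentiable ℝ K1)
    (hV0 : ∀ t, V0 t ≠ 0) (hV1 : ∀ t, V1 t ≠ 0)
    (hα : α0 + α1 = 1)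
    (e1 : ∀ t, deriv V0 t = V0 t * (K1 t + V1 t - K0 t - V0 t + α0))
    (e2 : ∀ t, deriv V1 t = V1 t * (K0 t + V0 t - K1 t - V1 t + α1))
    (e3 : ∀ t, deriv K0 t = K0 t * V0 t - K1 t * V1 t)
    (e4 : ∀ t, deriv K1 t = K1 t * V1 t - K0 t * V0 t)
    (n1 : ∀ t : ℝ, V0 t * V1 t = Complex.exp t)
    (n2 : ∀ t, K0 t + K1 t = β0) :
    Differentiable ℝ (deriv V0) ∧
    ∀ t : ℝ, deriv (deriv V0) t =
      (deriv V0 t) ^ 2 / V0 t + (V0 t) ^ 3 - (α0 + β0) * (V0 t) ^ 2 +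
        (β0 - α0 + 1) * Complex.exp t - Complex.exp (2 * t) / V0 t :=
  painleveIII_from_relativistic_Toda_general V0 V1 K0 K1 α0 α1 β0 hV0d hV1d hK0d hK1d hV0 hα e1 e2
    e3 e4 n1 n2
end

section
/- Suppose q = λ^{−2} and a_1 = 1/(a_0 λ) for a nonzero complex constant λ, and let f_0, f_1 : ℤ → ℂ solve the q-Painlevé III system qP3(ν, p) with ν = 0 and p = q^{2N+1}c² for an integer N and a nonzero constant c. Define x : ℤ → ℂ by x_{2n} = f_1(n) and x_{2n+1} = f_0(n). Then x satisfies the q-Painlevé II equation x_{m+1} x_m x_{m−1} = ξ·(x_m + ζ λ^m)/(1 + ζ λ^m x_m) for all m ∈ ℤ, with ξ = q^{2N+1}c² and ζ = 1/(a_0 λ). -/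
/-! Writing `x` for the interlaced sequence, the two halves of `qP3` are exactly the `q`-PII
equation at even and at odd sites: the second half at `m = 2n` after `a₁q⁻ⁿ = ζλ²ⁿ`, the first
half at `m = 2n + 1` after the Möbius identity `(1 + tz)/(t + z) = (z + t⁻¹)/(1 + t⁻¹z)` with
`t = a₀qⁿ`, since `t⁻¹ = ζλ²ⁿ⁺¹`. -/

/-- `f₀, f₁ : ℤ → ℂ` solve the `q`-Painlevé III system `qP3(ν, p)`:
`f₁(n+1) = (p/(f₀(n)f₁(n)))·(1 + a₀qⁿf₀(n))/(a₀qⁿ + f₀(n))` and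
`f₀(n−1) = (p/(f₀(n)f₁(n)))·(a₁q^{ν−n} + f₁(n))/(1 + a₁q^{ν−n}f₁(n))`. -/
def qP3 (q a0 a1 : ℂ) (ν : ℤ) (p : ℂ) (f0 f1 : ℤ → ℂ) : Prop :=
  ∀ n : ℤ,
    f1 (n + 1) = p / (f0 n * f1 n) * ((1 + a0 * q ^ n * f0 n) / (a0 * q ^ n + f0 n)) ∧
    f0 (n - 1) = p / (f0 n * f1 n) * ((a1 * q ^ (ν - n) + f1 n) / (1 + a1 * q ^ (ν - n) * f1 n))

theorem one_add_mul_div_add_eq {K : Type*} [Field K] {t : K} (ht : t ≠ 0) (z : K) :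
    (1 + t * z) / (t + z) = (z + t⁻¹) / (1 + t⁻¹ * z) := by
  rw [← mul_div_mul_left (z + t⁻¹) _ ht]
  congr 1
  · field_simp
    ring
  · field_simp

namespace qP3

variable {q a0 a1 p : ℂ} {ν : ℤ} {f0 f1 : ℤ → ℂ}

theorem mul_next (h : qP3 q a0 a1 ν p f0 f1) {n : ℤ} (h0 : f0 n ≠ 0) (h1 : f1 n ≠ 0) :
    f1 (n + 1) * f0 n * f1 n = p * ((1 + a0 * q ^ n * f0 n) / (a0 * q ^ n + f0 n)) := by
  rw [(h n).1]
  field_simp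

theorem mul_prev (h : qP3 q a0 a1 ν p f0 f1) {n : ℤ} (h0 : f0 n ≠ 0) (h1 : f1 n ≠ 0) :
    f0 n * f1 n * f0 (n - 1) =
      p * ((a1 * q ^ (ν - n) + f1 n) / (1 + a1 * q ^ (ν - n) * f1 n)) := by
  rw [(h n).2]
  field_simp

end qP3

section Specialization

variable {q lam : ℂ}

theorem zpow_neg_eq_zpow_two_mul (hq : q = lam ^ (-2 : ℤ)) (n : ℤ) : q ^ (-n) = lam ^ (2 * n) := by
  rw [hq, ← zpow_mul]
  ring_nf

theorem inv_mul_zpow_eq (hq : q = lam ^ (-2 : ℤ)) (hlam : lam ≠ 0) (a0 : ℂ) (n : ℤ) :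
    (a0 * q ^ n)⁻¹ = 1 / (a0 * lam) * lam ^ (2 * n + 1) := by
  rw [mul_inv, ← zpow_neg, zpow_neg_eq_zpow_two_mul hq, zpow_add_one₀ hlam]
  field_simp

end Specialization

theorem qPII_from_qPIII_general (q a0 a1 lam c : ℂ) (N : ℤ)
    (hlam : lam ≠ 0) (ha0 : a0 ≠ 0)
    (hq : q = lam ^ (-2 : ℤ)) (ha1 : a1 = 1 / (a0 * lam))
    (f0 f1 : ℤ → ℂ)
    (hsol : qP3 q a0 a1 0 (q ^ (2 * N + 1) * c ^ 2) f0 f1)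
    -- all denominators occurring are assumed nonzero
    (hden : ∀ n : ℤ, f0 n ≠ 0 ∧ f1 n ≠ 0 ∧ a0 * q ^ n + f0 n ≠ 0 ∧
      1 + a1 * q ^ (0 - n) * f1 n ≠ 0)
    (x : ℤ → ℂ) (hx : ∀ n : ℤ, x (2 * n) = f1 n ∧ x (2 * n + 1) = f0 n) :
    ∀ m : ℤ, x (m + 1) * x m * x (m - 1) =
      q ^ (2 * N + 1) * c ^ 2 *
        ((x m + 1 / (a0 * lam) * lam ^ m) / (1 + 1 / (a0 * lam) * lam ^ m * x m)) := by
  intro m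
  obtain ⟨n, rfl | rfl⟩ := Int.even_or_odd' m
  · obtain ⟨h0, h1, -⟩ := hden n
    have hprev : x (2 * n - 1) = f0 (n - 1) := by rw [← (hx (n - 1)).2]; ring_nf
    have hζ : a1 * q ^ (0 - n) = 1 / (a0 * lam) * lam ^ (2 * n) := by
      rw [ha1, zero_sub, zpow_neg_eq_zpow_two_mul hq]
    rw [(hx n).2, (hx n).1, hprev, hsol.mul_prev h0 h1, hζ, add_comm (f1 n)]
  · obtain ⟨h0, h1, -⟩ := hden n
    have hnext : x (2 * n + 1 + 1) = f1 (n + 1) := by rw [← (hx (n + 1)).1]; ring_nf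
    have hcur : x (2 * n + 1 - 1) = f1 n := by rw [← (hx n).1]; ring_nf
    have ht : a0 * q ^ n ≠ 0 := mul_ne_zero ha0 (hq ▸ zpow_ne_zero _ (zpow_ne_zero _ hlam))
    rw [hnext, (hx n).2, hcur, hsol.mul_next h0 h1, one_add_mul_div_add_eq ht,
      inv_mul_zpow_eq hq hlam]

/-- under the specialization `q = λ⁻²`, `a₁ = 1/(a₀λ)`, `ν = 0`,
`p = q^{2N+1}c²`, interlacing the solutions of `q`-PIII as `x_{2n} = f₁(n)`,
`x_{2n+1} = f₀(n)` yields a solution of the `q`-Painlevé II equation with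
`ξ = q^{2N+1}c²` and `ζ = 1/(a₀λ)`. -/
theorem qPII_from_qPIII (q a0 a1 lam c : ℂ) (N : ℤ)
    (hlam : lam ≠ 0) (ha0 : a0 ≠ 0) (hc : c ≠ 0)
    (hq : q = lam ^ (-2 : ℤ)) (ha1 : a1 = 1 / (a0 * lam))
    (f0 f1 : ℤ → ℂ)
    (hsol : qP3 q a0 a1 0 (q ^ (2 * N + 1) * c ^ 2) f0 f1)
    -- all denominators occurring are assumed nonzero
    (hden : ∀ n : ℤ, f0 n ≠ 0 ∧ f1 n ≠ 0 ∧ a0 * q ^ n + f0 n ≠ 0 ∧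
      1 + a1 * q ^ (0 - n) * f1 n ≠ 0)
    (x : ℤ → ℂ) (hx : ∀ n : ℤ, x (2 * n) = f1 n ∧ x (2 * n + 1) = f0 n) :
    ∀ m : ℤ, x (m + 1) * x m * x (m - 1) =
      q ^ (2 * N + 1) * c ^ 2 *
        ((x m + 1 / (a0 * lam) * lam ^ m) / (1 + 1 / (a0 * lam) * lam ^ m * x m)) :=
  qPII_from_qPIII_general q a0 a1 lam c N hlam ha0 hq ha1 f0 f1 hsol hden x hx
end

section
/- Let q, a_0, a_1 be nonzero complex constants and ν ∈ ℤ. Suppose f_0, f_1 : ℤ → ℂ satisfy the pair of discrete Riccati equations f_1(n+1) = −(q^{−ν+1}/(a_0 a_1))·(1 + a_0 q^n f_0(n))/f_0(n) and f_1(n) = −a_0 a_1 q^{ν}/(a_0 q^n + f_0(n)) for all n ∈ ℤ (with f_0(n) ≠ 0 and a_0 q^n + f_0(n) ≠ 0). Then f_0, f_1 solve the q-Painlevé III system qP3(ν, p) with p = q (i.e., N = 0 and c = 1). -/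
/-!
Write `A = qⁿ`, `B = q^ν`, `x = f₀(n)`, `f = f₁(n)`. The second Riccati equation says
`f (a₀A + x) = -a₀a₁B`; substituting it into the first Riccati equation gives the forward
equation of `qP3(ν, q)`. For the backward equation, the first Riccati equation at `n - 1` solves to
`f₀(n-1) = -q / (a₀ (A + a₁B f))`, and the second one turns this into the required expression.
-/

section RiccatiAlgebra

variable {K : Type*} [Field K]

theorem qP3_forward_of_riccati {q a0 a1 A B x f : K} (hx : x ≠ 0) (hs : a0 * A + x ≠ 0)
    (hf : f = -(a0 * a1 * B) / (a0 * A + x)) :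
    -(q / B / (a0 * a1)) * ((1 + a0 * A * x) / x) =
      q / (x * f) * ((1 + a0 * A * x) / (a0 * A + x)) := by
  subst hf
  rcases eq_or_ne (a0 * a1 * B) 0 with hc | hc
  · rw [hc, div_div, mul_comm B, hc]
    simp
  · field_simp

theorem qP3_backward_of_riccati {q a0 a1 A B x y f : K} (hq : q ≠ 0) (ha0 : a0 ≠ 0)
    (ha1 : a1 ≠ 0) (hA : A ≠ 0) (hB : B ≠ 0) (hx : x ≠ 0) (hy : y ≠ 0)
    (hs : a0 * A + x ≠ 0) (ht : 1 + a1 * (B / A) * f ≠ 0)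
    (hf : f = -(a0 * a1 * B) / (a0 * A + x))
    (hf' : f = -(q / B / (a0 * a1)) * ((1 + a0 * (A * q⁻¹) * y) / y)) :
    y = q / (x * f) * ((a1 * (B / A) + f) / (1 + a1 * (B / A) * f)) := by
  have hy_eq : y * (a0 * (A + a1 * B * f)) = -q := by
    rw [hf']
    field_simp
    ring
  have hf_eq : f * (a0 * A + x) = -(a0 * a1 * B) := by
    rw [hf]
    field_simp
  have hf0 : f ≠ 0 := by
    rintro rfl
    simp [ha0, ha1, hB] at hf_eq
  have ht' : A + a1 * B * f ≠ 0 := by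
    contrapose! ht
    field_simp
    linear_combination ht
  have hrhs : q / (x * f) * ((a1 * (B / A) + f) / (1 + a1 * (B / A) * f)) =
      q * (a1 * B + A * f) / (x * f * (A + a1 * B * f)) := by
    field_simp
  rw [hrhs, eq_div_iff (by positivity), ← mul_right_inj' ha0]
  linear_combination x * f * hy_eq - q * hf_eq

end RiccatiAlgebra

/-- if `f₀, f₁` satisfy the pair of discrete Riccati equations
`f₁(n+1) = −(q^{−ν+1}/(a₀a₁))(1 + a₀qⁿf₀(n))/f₀(n)` and
`f₁(n) = −a₀a₁q^ν/(a₀qⁿ + f₀(n))`, then they solve `qP3(ν, q)`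
(i.e. `N = 0`, `c = 1`). -/
theorem qPIII_from_Riccati_pair (q a0 a1 : ℂ)
    (hq : q ≠ 0) (ha0 : a0 ≠ 0) (ha1 : a1 ≠ 0) (ν : ℤ)
    (f0 f1 : ℤ → ℂ)
    -- all denominators occurring are assumed nonzero
    (hden : ∀ n : ℤ, f0 n ≠ 0 ∧ a0 * q ^ n + f0 n ≠ 0 ∧
      1 + a1 * q ^ (ν - n) * f1 n ≠ 0)
    (h1 : ∀ n : ℤ, f1 (n + 1) =
      -(q ^ (-ν + 1) / (a0 * a1)) * ((1 + a0 * q ^ n * f0 n) / f0 n))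
    (h2 : ∀ n : ℤ, f1 n = -(a0 * a1 * q ^ ν) / (a0 * q ^ n + f0 n)) :
    qP3 q a0 a1 ν q f0 f1 := by
  intro n
  obtain ⟨hx, hs, ht⟩ := hden n
  have hshift : q ^ (-ν + 1) = q / q ^ ν := by
    rw [zpow_add_one₀ hq, zpow_neg, inv_mul_eq_div]
  refine ⟨?_, ?_⟩
  · rw [h1 n, hshift]
    exact qP3_forward_of_riccati hx hs (h2 n)
  · have hprev := h1 (n - 1)
    rw [sub_add_cancel, hshift, zpow_sub_one₀ hq] at hprev
    rw [zpow_sub₀ hq] at ht ⊢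
    exact qP3_backward_of_riccati hq ha0 ha1 (zpow_ne_zero n hq) (zpow_ne_zero ν hq) hx
      (hden (n - 1)).1 hs ht (h2 n) hprev
end

section
/- Let q, a_0, a_1 be nonzero complex constants and ν ∈ ℤ. Let H : ℤ → ℂ be a nowhere-vanishing function satisfying the three-term recurrence H(n+1) = (1 + a_0² a_1² q^{2ν} − a_0² q^{2n})·H(n) − a_0² a_1² q^{2ν}·H(n−1) for all n ∈ ℤ, and assume H(n+1) − (1 − a_0² q^{2n})H(n) ≠ 0 for all n. Then f_0(n) = (1/(a_0 q^n))·(H(n+1) − H(n))/H(n) and f_1(n) = −a_0² a_1 q^{n+ν}·H(n)/( H(n+1) − (1 − a_0² q^{2n})·H(n) ) solve the q-Painlevé III system qP3(ν, p) with p = q (i.e., N = 0 and c = 1). -/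
/-!
With `s(n) = a₀qⁿ + f₀(n)`, the formula for `f₁` is the Riccati relation `f₁(n) = -a₀a₁q^ν / s(n)`.
Substituting it, the first equation of `qP3(ν, q)` at `n` and the second at `n + 1` both become the
first-order Riccati equation `a₀²a₁²q^{2ν} f₀(n) = q (1 + a₀qⁿf₀(n)) (a₀q^{n+1} + f₀(n+1))`.
Since `1 + a₀qⁿf₀(n) = H(n+1)/H(n)`, this Riccati equation is the three-term recurrence for `H`
at `n + 1`, divided by `H(n)`.
-/

theorem zpow_two_mul {G : Type*} [DivisionMonoid G] (a : G) (n : ℤ) :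
    a ^ (2 * n) = (a ^ n) ^ 2 := by
  rw [zpow_mul', zpow_ofNat]

section Algebra

variable {K : Type*} [Field K] {q a0 a1 x y f u : K}

theorem qP3_fst_eq_of_riccati (ha0 : a0 ≠ 0) (ha1 : a1 ≠ 0) (hy : y ≠ 0) (hf : f ≠ 0)
    (hs : a0 * x + f ≠ 0) (hs' : a0 * x * q + u ≠ 0)
    (hric : a0 ^ 2 * a1 ^ 2 * y ^ 2 * f = q * (1 + a0 * x * f) * (a0 * x * q + u)) :
    -(a0 * a1 * y) / (a0 * x * q + u) =
      q / (f * (-(a0 * a1 * y) / (a0 * x + f))) * ((1 + a0 * x * f) / (a0 * x + f)) := by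
  simp only [neg_div, mul_neg, div_neg]
  field_simp
  linear_combination -hric

theorem qP3_snd_eq_of_riccati (hq : q ≠ 0) (ha0 : a0 ≠ 0) (ha1 : a1 ≠ 0) (hx : x ≠ 0)
    (hy : y ≠ 0) (hf : f ≠ 0) (hs : a0 * x + f ≠ 0)
    (hric : a0 ^ 2 * a1 ^ 2 * y ^ 2 * u = q * (1 + a0 * (x / q) * u) * (a0 * x + f)) :
    u = q / (f * (-(a0 * a1 * y) / (a0 * x + f))) *
      ((a1 * (y / x) + -(a0 * a1 * y) / (a0 * x + f)) /
        (1 + a1 * (y / x) * (-(a0 * a1 * y) / (a0 * x + f)))) := by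
  field_simp at hric
  -- otherwise the Riccati equation would force `q * (a0 * x + f) = 0`
  have hden : x * (a0 * x + f) - a0 * a1 ^ 2 * y ^ 2 ≠ 0 := by
    intro h
    apply mul_ne_zero hq hs
    linear_combination (-a0 * u) * h - hric
  simp only [neg_div, mul_neg, div_neg, ← sub_eq_add_neg]
  field_simp
  linear_combination (-f) * hric

end Algebra

theorem qP3_of_riccati {q a0 a1 : ℂ} {ν : ℤ} {f0 f1 : ℤ → ℂ}
    (hq : q ≠ 0) (ha0 : a0 ≠ 0) (ha1 : a1 ≠ 0) (hf0 : ∀ n, f0 n ≠ 0)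
    (hs : ∀ n, a0 * q ^ n + f0 n ≠ 0)
    (hf1 : ∀ n, f1 n = -(a0 * a1 * q ^ ν) / (a0 * q ^ n + f0 n))
    (hric : ∀ n, a0 ^ 2 * a1 ^ 2 * q ^ (2 * ν) * f0 n =
      q * (1 + a0 * q ^ n * f0 n) * (a0 * q ^ (n + 1) + f0 (n + 1))) :
    qP3 q a0 a1 ν q f0 f1 := by
  have hy : q ^ ν ≠ 0 := zpow_ne_zero ν hq
  simp only [zpow_two_mul] at hric
  intro n
  constructor
  · have hs' := hs (n + 1)
    have hric' := hric n
    rw [zpow_add_one₀ hq, ← mul_assoc] at hs' hric'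
    rw [hf1, hf1, zpow_add_one₀ hq, ← mul_assoc]
    exact qP3_fst_eq_of_riccati ha0 ha1 hy (hf0 n) (hs n) hs' hric'
  · have hric' := hric (n - 1)
    rw [sub_add_cancel, zpow_sub_one₀ hq, ← div_eq_mul_inv] at hric'
    rw [hf1, zpow_sub₀ hq]
    exact qP3_snd_eq_of_riccati hq ha0 ha1 (zpow_ne_zero n hq) hy (hf0 n) (hs n) hric'

section Linearization

variable {K : Type*} [Field K] {q a0 a1 : K} {ν : ℤ} {H f0 : ℤ → K}

theorem mul_zpow_add_eq_of_logDiff (ha0 : a0 ≠ 0) (hq : q ≠ 0) (hH : ∀ n, H n ≠ 0)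
    (hf0 : ∀ n, f0 n = 1 / (a0 * q ^ n) * ((H (n + 1) - H n) / H n)) (n : ℤ) :
    a0 * q ^ n + f0 n =
      (H (n + 1) - (1 - a0 ^ 2 * q ^ (2 * n)) * H n) / (a0 * q ^ n * H n) := by
  have hx : q ^ n ≠ 0 := zpow_ne_zero n hq
  have hHn := hH n
  rw [hf0, zpow_two_mul]
  field_simp
  ring

theorem riccati_of_linear_recurrence (ha0 : a0 ≠ 0) (hq : q ≠ 0) (hH : ∀ n, H n ≠ 0)
    (hrec : ∀ n : ℤ, H (n + 1) =
      (1 + a0 ^ 2 * a1 ^ 2 * q ^ (2 * ν) - a0 ^ 2 * q ^ (2 * n)) * H n -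
        a0 ^ 2 * a1 ^ 2 * q ^ (2 * ν) * H (n - 1))
    (hf0 : ∀ n, f0 n = 1 / (a0 * q ^ n) * ((H (n + 1) - H n) / H n)) (n : ℤ) :
    a0 ^ 2 * a1 ^ 2 * q ^ (2 * ν) * f0 n =
      q * (1 + a0 * q ^ n * f0 n) * (a0 * q ^ (n + 1) + f0 (n + 1)) := by
  have hx : q ^ n ≠ 0 := zpow_ne_zero n hq
  have h0 := hH n
  have h1 := hH (n + 1)
  have hrec' := hrec (n + 1)
  rw [add_sub_cancel_right] at hrec'
  simp only [zpow_two_mul, zpow_add_one₀ hq] at hrec'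
  rw [hf0, hf0, zpow_add_one₀ hq, zpow_two_mul]
  field_simp
  linear_combination (-H (n + 1)) * hrec'

end Linearization

/-- linearization of the Riccati solution: if `H` satisfies the
three-term recurrence `H(n+1) = (1 + a₀²a₁²q^{2ν} − a₀²q^{2n})H(n) − a₀²a₁²q^{2ν}H(n−1)`,
then `f₀(n) = (1/(a₀qⁿ))(H(n+1) − H(n))/H(n)` and
`f₁(n) = −a₀²a₁q^{n+ν}H(n)/(H(n+1) − (1 − a₀²q^{2n})H(n))` solve `qP3(ν, q)`. -/
theorem qPIII_linearized_Riccati_solution (q a0 a1 : ℂ)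
    (hq : q ≠ 0) (ha0 : a0 ≠ 0) (ha1 : a1 ≠ 0) (ν : ℤ)
    (H : ℤ → ℂ) (hH : ∀ n, H n ≠ 0)
    (hrec : ∀ n : ℤ, H (n + 1) =
      (1 + a0 ^ 2 * a1 ^ 2 * q ^ (2 * ν) - a0 ^ 2 * q ^ (2 * n)) * H n -
        a0 ^ 2 * a1 ^ 2 * q ^ (2 * ν) * H (n - 1))
    (hH' : ∀ n : ℤ, H (n + 1) - (1 - a0 ^ 2 * q ^ (2 * n)) * H n ≠ 0)
    (f0 f1 : ℤ → ℂ)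
    (hf0 : ∀ n : ℤ, f0 n = 1 / (a0 * q ^ n) * ((H (n + 1) - H n) / H n))
    (hf1 : ∀ n : ℤ, f1 n = -(a0 ^ 2 * a1 * q ^ (n + ν)) * H n /
      (H (n + 1) - (1 - a0 ^ 2 * q ^ (2 * n)) * H n))
    -- all denominators occurring are assumed nonzero
    (hden : ∀ n : ℤ, f0 n ≠ 0) :
    qP3 q a0 a1 ν q f0 f1 := by
  have hs (n : ℤ) : a0 * q ^ n + f0 n ≠ 0 := by
    rw [mul_zpow_add_eq_of_logDiff ha0 hq hH hf0]
    exact div_ne_zero (hH' n) (mul_ne_zero (mul_ne_zero ha0 (zpow_ne_zero n hq)) (hH n))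
  refine qP3_of_riccati hq ha0 ha1 hden hs (fun n => ?_)
    (riccati_of_linear_recurrence ha0 hq hH hrec hf0)
  rw [hf1, mul_zpow_add_eq_of_logDiff ha0 hq hH hf0, div_div_eq_mul_div, zpow_add₀ hq]
  ring
end

section
/- Let q, a_0, a_1 be nonzero complex constants and let H : ℤ × ℤ → ℂ (written H_ν(n)) be a nowhere-vanishing function satisfying the contiguity relations H_ν(n+1) − H_ν(n) = −a_0² q^{2n}·H_{ν−1}(n) and H_{ν+1}(n) − H_ν(n) = −a_0² a_1² q^{2ν}·H_ν(n−1) for all ν, n ∈ ℤ. Then, for every fixed ν ∈ ℤ, the functions f_0(n) = −a_0 q^n · H_{ν−1}(n)/H_ν(n) and f_1(n) = (1/(a_0² a_1 q^{n+ν−2}))·H_ν(n)/H_{ν−1}(n−1) solve the q-Painlevé III system qP3(ν, p) with p = q (i.e., N = 0 and c = 1). -/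
section Contiguity

variable {K : Type*} [Field K] {q a0 a1 : K} {H : ℤ → ℤ → K} {ν n : ℤ}

def contiguityF0 (q a0 : K) (H : ℤ → ℤ → K) (ν n : ℤ) : K :=
  -(a0 * q ^ n) * H (ν - 1) n / H ν n

def contiguityF1 (q a0 a1 : K) (H : ℤ → ℤ → K) (ν n : ℤ) : K :=
  1 / (a0 ^ 2 * a1 * q ^ (n + ν - 2)) * (H ν n / H (ν - 1) (n - 1))

theorem one_add_mul_contiguityF0 (hB : H ν n ≠ 0)
    (h : H ν (n + 1) - H ν n = -(a0 ^ 2 * q ^ (2 * n)) * H (ν - 1) n) :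
    1 + a0 * q ^ n * contiguityF0 q a0 H ν n = H ν (n + 1) / H ν n := by
  rw [mul_comm 2 n, zpow_mul, zpow_ofNat] at h
  unfold contiguityF0
  field_simp
  linear_combination -h

theorem mul_zpow_add_contiguityF0 (hq : q ≠ 0) (hB : H ν n ≠ 0)
    (h : H ν n - H (ν - 1) n = -(a0 ^ 2 * a1 ^ 2 * q ^ (2 * (ν - 1))) * H (ν - 1) (n - 1)) :
    a0 * q ^ n + contiguityF0 q a0 H ν n =
      -(a0 ^ 3 * a1 ^ 2 * q ^ (n + 2 * (ν - 1))) * H (ν - 1) (n - 1) / H ν n := by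
  unfold contiguityF0
  rw [zpow_add₀ hq]
  field_simp
  linear_combination a0 * h

theorem contiguityF0_mul_contiguityF1 (hq : q ≠ 0) (ha0 : a0 ≠ 0) (hB : H ν n ≠ 0) :
    contiguityF0 q a0 H ν n * contiguityF1 q a0 a1 H ν n =
      -H (ν - 1) n / (a0 * a1 * q ^ (ν - 2) * H (ν - 1) (n - 1)) := by
  unfold contiguityF0 contiguityF1
  rw [add_sub_assoc, zpow_add₀ hq]
  field_simp

theorem mul_zpow_sub_add_contiguityF1 (hq : q ≠ 0) (ha0 : a0 ≠ 0) (ha1 : a1 ≠ 0)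
    (hA : H (ν - 1) (n - 1) ≠ 0)
    (h : H ν n - H (ν - 1) n = -(a0 ^ 2 * a1 ^ 2 * q ^ (2 * (ν - 1))) * H (ν - 1) (n - 1)) :
    a1 * q ^ (ν - n) + contiguityF1 q a0 a1 H ν n =
      H (ν - 1) n / (a0 ^ 2 * a1 * q ^ (n + ν - 2) * H (ν - 1) (n - 1)) := by
  unfold contiguityF1
  simp only [zpow_add₀ hq, zpow_sub₀ hq, two_mul, zpow_one] at h ⊢
  field_simp at h ⊢
  linear_combination h

theorem one_add_mul_zpow_sub_contiguityF1 (hq : q ≠ 0) (ha0 : a0 ≠ 0) (ha1 : a1 ≠ 0)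
    (hA : H (ν - 1) (n - 1) ≠ 0)
    (h : H ν n - H ν (n - 1) = -(a0 ^ 2 * q ^ (2 * (n - 1))) * H (ν - 1) (n - 1)) :
    1 + a1 * q ^ (ν - n) * contiguityF1 q a0 a1 H ν n =
      H ν (n - 1) / (a0 ^ 2 * q ^ (2 * (n - 1)) * H (ν - 1) (n - 1)) := by
  unfold contiguityF1
  simp only [zpow_add₀ hq, zpow_sub₀ hq, two_mul, zpow_one] at h ⊢
  field_simp at h ⊢
  linear_combination h

theorem contiguityF1_add_one
    (hq : q ≠ 0) (ha0 : a0 ≠ 0) (ha1 : a1 ≠ 0) (hH : ∀ m n : ℤ, H m n ≠ 0)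
    (hH1 : ∀ m n : ℤ, H m (n + 1) - H m n = -(a0 ^ 2 * q ^ (2 * n)) * H (m - 1) n)
    (hH2 : ∀ m n : ℤ, H (m + 1) n - H m n = -(a0 ^ 2 * a1 ^ 2 * q ^ (2 * m)) * H m (n - 1)) :
    contiguityF1 q a0 a1 H ν (n + 1) =
      q / (contiguityF0 q a0 H ν n * contiguityF1 q a0 a1 H ν n) *
        ((1 + a0 * q ^ n * contiguityF0 q a0 H ν n) /
          (a0 * q ^ n + contiguityF0 q a0 H ν n)) := by
  have h₂ := sub_add_cancel ν 1 ▸ hH2 (ν - 1) n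
  rw [contiguityF0_mul_contiguityF1 hq ha0 (hH ν n), one_add_mul_contiguityF0 (hH ν n) (hH1 ν n),
    mul_zpow_add_contiguityF0 hq (hH ν n) h₂, contiguityF1, add_sub_cancel_right]
  simp only [zpow_add₀ hq, zpow_sub₀ hq, two_mul, zpow_one]
  field_simp [hH]

theorem contiguityF0_sub_one
    (hq : q ≠ 0) (ha0 : a0 ≠ 0) (ha1 : a1 ≠ 0) (hH : ∀ m n : ℤ, H m n ≠ 0)
    (hH1 : ∀ m n : ℤ, H m (n + 1) - H m n = -(a0 ^ 2 * q ^ (2 * n)) * H (m - 1) n)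
    (hH2 : ∀ m n : ℤ, H (m + 1) n - H m n = -(a0 ^ 2 * a1 ^ 2 * q ^ (2 * m)) * H m (n - 1)) :
    contiguityF0 q a0 H ν (n - 1) =
      q / (contiguityF0 q a0 H ν n * contiguityF1 q a0 a1 H ν n) *
        ((a1 * q ^ (ν - n) + contiguityF1 q a0 a1 H ν n) /
          (1 + a1 * q ^ (ν - n) * contiguityF1 q a0 a1 H ν n)) := by
  have h₂ := sub_add_cancel ν 1 ▸ hH2 (ν - 1) n
  have h₃ := sub_add_cancel n 1 ▸ hH1 ν (n - 1)
  rw [contiguityF0_mul_contiguityF1 hq ha0 (hH ν n),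
    mul_zpow_sub_add_contiguityF1 hq ha0 ha1 (hH _ _) h₂,
    one_add_mul_zpow_sub_contiguityF1 hq ha0 ha1 (hH _ _) h₃, contiguityF0]
  simp only [zpow_add₀ hq, zpow_sub₀ hq, two_mul, zpow_one]
  field_simp [hH]

end Contiguity

/-- if `H_ν(n)` is nowhere vanishing and satisfies the contiguity
relations `H_ν(n+1) − H_ν(n) = −a₀²q^{2n}H_{ν−1}(n)` and
`H_{ν+1}(n) − H_ν(n) = −a₀²a₁²q^{2ν}H_ν(n−1)`, then for every fixed `ν`,
`f₀(n) = −a₀qⁿ H_{ν−1}(n)/H_ν(n)` and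
`f₁(n) = (1/(a₀²a₁q^{n+ν−2})) H_ν(n)/H_{ν−1}(n−1)` solve `qP3(ν, q)`. -/
theorem qPIII_contiguity_solution (q a0 a1 : ℂ)
    (hq : q ≠ 0) (ha0 : a0 ≠ 0) (ha1 : a1 ≠ 0)
    (H : ℤ → ℤ → ℂ) (hH : ∀ m n : ℤ, H m n ≠ 0)
    (hH1 : ∀ m n : ℤ, H m (n + 1) - H m n = -(a0 ^ 2 * q ^ (2 * n)) * H (m - 1) n)
    (hH2 : ∀ m n : ℤ, H (m + 1) n - H m n = -(a0 ^ 2 * a1 ^ 2 * q ^ (2 * m)) * H m (n - 1))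
    (ν : ℤ) (f0 f1 : ℤ → ℂ)
    (hf0 : ∀ n : ℤ, f0 n = -(a0 * q ^ n) * H (ν - 1) n / H ν n)
    (hf1 : ∀ n : ℤ, f1 n =
      1 / (a0 ^ 2 * a1 * q ^ (n + ν - 2)) * (H ν n / H (ν - 1) (n - 1))) :
    qP3 q a0 a1 ν q f0 f1 := by
  obtain rfl : f0 = contiguityF0 q a0 H ν := funext hf0
  obtain rfl : f1 = contiguityF1 q a0 a1 H ν := funext hf1
  exact fun n => ⟨contiguityF1_add_one hq ha0 ha1 hH hH1 hH2,
    contiguityF0_sub_one hq ha0 ha1 hH hH1 hH2⟩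
end
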